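/- For p = 1 and any c > 0, the DAP distance satisfies the triangle inequality: for all probabilistic polyline sets X, Y, Z over a metric space (E, d), d_PLD^{(c,1)}(X, Z) ≤ d_PLD^{(c,1)}(X, Y) + d_PLD^{(c,1)}(Y, Z). -/
import Mathlib


open scoped BigOperators

/-- A polyline: a finite sequence of points of `E`, given by its length and an
indexing function. -/
def Polyline (E : Type*) : Type _ := Σ n : ℕ, Fin n → E

/-- An ordered assignment set between `{1,…,n}` and `{1,…,m}`: each first index and each
second index appears at most once, and the pairs respect a strictly increasing order. -/
def IsOrderedAssignment {n m : ℕ} (θ : Finset (Fin n × Fin m)) : Prop :=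
  ∀ a ∈ θ, ∀ b ∈ θ, (a.1 < b.1 ↔ a.2 < b.2)

/-- A (not necessarily ordered) assignment set: each first index and each second index
appears at most once. -/
def IsAssignment {n m : ℕ} (θ : Finset (Fin n × Fin m)) : Prop :=
  ∀ a ∈ θ, ∀ b ∈ θ, (a.1 = b.1 ↔ a.2 = b.2)

/-- The assignment cost `C(θ, x, y)` of an assignment set `θ` between polylines `x` and `y`. -/
noncomputable def cost {E : Type*} [MetricSpace E] (c p : ℝ) (x y : Polyline E)
    (θ : Finset (Fin x.1 × Fin y.1)) : ℝ :=
  (∑ ij ∈ θ, dist (x.2 ij.1) (y.2 ij.2) ^ p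
    + c ^ p / 2 * ((x.1 : ℝ) + (y.1 : ℝ) - 2 * (θ.card : ℝ))) ^ (1 / p)

/-- The SOSPA distance: the minimum assignment cost over all ordered assignment sets. -/
noncomputable def dSOSPA {E : Type*} [MetricSpace E] (c p : ℝ) (x y : Polyline E) : ℝ :=
  ⨅ θ : {θ : Finset (Fin x.1 × Fin y.1) // IsOrderedAssignment θ}, cost c p x y θ.1

/-- The normalized SOSPA, valued in `[0,1]`, with the convention that it is `0` when
both polylines are empty. -/
noncomputable def dSOSPAn {E : Type*} [MetricSpace E] (c p : ℝ) (x y : Polyline E) : ℝ :=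
  if x.1 = 0 ∧ y.1 = 0 then 0
  else 2 * dSOSPA c p x y /
    ((c ^ p / 2 * ((x.1 : ℝ) + (y.1 : ℝ))) ^ (1 / p) + dSOSPA c p x y)

/-- The cost of a trace `T` (an ordered assignment set) for the generalized edit distance
with substitution costs `γsub`, deletion costs `γdel`, and insertion costs `γins`. -/
noncomputable def traceCost {n m : ℕ} (γsub : Fin n → Fin m → ℝ) (γdel : Fin n → ℝ)
    (γins : Fin m → ℝ) (T : Finset (Fin n × Fin m)) : ℝ :=
  ∑ ij ∈ T, γsub ij.1 ij.2
    + ∑ i ∈ Finset.univ.filter (fun i => ∀ j, (i, j) ∉ T), γdel i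
    + ∑ j ∈ Finset.univ.filter (fun j => ∀ i, (i, j) ∉ T), γins j

/-- The composition `θ₁ ∘ θ₂` of two assignment sets. -/
def composeAssignment {n k m : ℕ} (θ₁ : Finset (Fin n × Fin k)) (θ₂ : Finset (Fin k × Fin m)) :
    Finset (Fin n × Fin m) :=
  Finset.univ.filter fun im => ∃ j, (im.1, j) ∈ θ₁ ∧ (j, im.2) ∈ θ₂

/-- The cyclic shift `S_s(x)` of a polyline `x`: the `k`-th point of `S_s(x)` is the
`⟨k+s⟩_{|x|}`-th point of `x`. -/
def shift {E : Type*} (s : ℕ) (x : Polyline E) : Polyline E :=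
  ⟨x.1, fun i => x.2 ⟨((i : ℕ) + s) % x.1, Nat.mod_lt _ i.pos⟩⟩

/-- A probabilistic polyline set: a finite indexed family of confidence–polyline pairs,
with confidences in `[0,1]`. -/
structure PPSet (E : Type*) where
  n : ℕ
  r : Fin n → ℝ
  poly : Fin n → Polyline E
  r_nonneg : ∀ i, 0 ≤ r i
  r_le_one : ∀ i, r i ≤ 1

/-- `R_X`, the total confidence of a probabilistic polyline set. -/
noncomputable def totalR {E : Type*} (X : PPSet E) : ℝ := ∑ i, X.r i

/-- The DAP distance `d_PLD^{(c,p)}` between two probabilistic polyline sets. -/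
noncomputable def dPLD {E : Type*} [MetricSpace E] (c p : ℝ) (X Y : PPSet E) : ℝ :=
  (⨅ θ : {θ : Finset (Fin X.n × Fin Y.n) // IsAssignment θ},
    (∑ ij ∈ θ.1, (min (X.r ij.1) (Y.r ij.2) * dSOSPAn c p (X.poly ij.1) (Y.poly ij.2) ^ p
        + |X.r ij.1 - Y.r ij.2| / 2)
      + (∑ i ∈ Finset.univ.filter (fun i => ∀ j, (i, j) ∉ θ.1), X.r i
          + ∑ j ∈ Finset.univ.filter (fun j => ∀ i, (i, j) ∉ θ.1), Y.r j) / 2)) ^ (1 / p)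

/-- The DAP similarity (for `p = 1`). -/
noncomputable def SPLD {E : Type*} [MetricSpace E] (c : ℝ) (X Y : PPSet E) : ℝ :=
  ((totalR X + totalR Y) / 2 - dPLD c 1 X Y) / 2

/-- The normalized DAP, with the convention that it equals `0` when the denominator is `0`. -/
noncomputable def dPLDn {E : Type*} [MetricSpace E] (c p : ℝ) (X Y : PPSet E) : ℝ :=
  if ((totalR X + totalR Y) / 2) ^ (1 / p) + dPLD c p X Y = 0 then 0
  else 2 * dPLD c p X Y / (((totalR X + totalR Y) / 2) ^ (1 / p) + dPLD c p X Y)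

/-- The multiset of confidence–polyline pairs of a probabilistic polyline set. -/
def PPSet.toMultiset {E : Type*} (X : PPSet E) : Multiset (ℝ × Polyline E) :=
  Finset.univ.val.map fun i => (X.r i, X.poly i)

section AuxAssignment

open Finset

variable {n₁ n₂ n₃ : ℕ}

lemma isAssignment_empty : IsAssignment (∅ : Finset (Fin n₁ × Fin n₂)) := by
  intro a ha; simp at ha

lemma isOrderedAssignment_empty : IsOrderedAssignment (∅ : Finset (Fin n₁ × Fin n₂)) := by
  intro a ha; simp at ha

lemma IsOrderedAssignment.isAssignment {θ : Finset (Fin n₁ × Fin n₂)}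
    (h : IsOrderedAssignment θ) : IsAssignment θ := by
  intro a ha b hb
  constructor
  · intro he
    by_contra hne
    rcases lt_or_gt_of_ne hne with hl | hl
    · exact absurd ((h a ha b hb).2 hl) (by simp [he])
    · exact absurd ((h b hb a ha).2 hl) (by simp [he])
  · intro he
    by_contra hne
    rcases lt_or_gt_of_ne hne with hl | hl
    · exact absurd ((h a ha b hb).1 hl) (by simp [he])
    · exact absurd ((h b hb a ha).1 hl) (by simp [he])

lemma mem_composeAssignment {A : Finset (Fin n₁ × Fin n₂)} {B : Finset (Fin n₂ × Fin n₃)}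
    {q : Fin n₁ × Fin n₃} : q ∈ composeAssignment A B ↔ ∃ j, (q.1, j) ∈ A ∧ (j, q.2) ∈ B := by
  simp [composeAssignment]

lemma IsAssignment.compose {A : Finset (Fin n₁ × Fin n₂)} {B : Finset (Fin n₂ × Fin n₃)}
    (hA : IsAssignment A) (hB : IsAssignment B) : IsAssignment (composeAssignment A B) := by
  intro a ha b hb
  obtain ⟨j, hj1, hj2⟩ := mem_composeAssignment.mp ha
  obtain ⟨j', hj1', hj2'⟩ := mem_composeAssignment.mp hb
  constructor
  · intro he
    exact (hB _ hj2 _ hj2').mp ((hA _ hj1 _ hj1').mp he)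
  · intro he
    exact (hA _ hj1 _ hj1').mpr ((hB _ hj2 _ hj2').mpr he)

lemma IsOrderedAssignment.compose {A : Finset (Fin n₁ × Fin n₂)} {B : Finset (Fin n₂ × Fin n₃)}
    (hA : IsOrderedAssignment A) (hB : IsOrderedAssignment B) :
    IsOrderedAssignment (composeAssignment A B) := by
  intro a ha b hb
  obtain ⟨j, hj1, hj2⟩ := mem_composeAssignment.mp ha
  obtain ⟨j', hj1', hj2'⟩ := mem_composeAssignment.mp hb
  constructor
  · intro hl
    exact (hB _ hj2 _ hj2').mp ((hA _ hj1 _ hj1').mp hl)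
  · intro hl
    exact (hA _ hj1 _ hj1').mpr ((hB _ hj2 _ hj2').mpr hl)

lemma IsAssignment.card_le_left {A : Finset (Fin n₁ × Fin n₂)} (hA : IsAssignment A) :
    A.card ≤ n₁ := by
  calc A.card = (A.image Prod.fst).card :=
        (Finset.card_image_of_injOn fun p hp q hq he =>
          Prod.ext he ((hA p hp q hq).mp he)).symm
    _ ≤ n₁ := by simpa using Finset.card_le_univ (A.image Prod.fst)

lemma IsAssignment.card_le_right {A : Finset (Fin n₁ × Fin n₂)} (hA : IsAssignment A) :
    A.card ≤ n₂ := by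
  calc A.card = (A.image Prod.snd).card :=
        (Finset.card_image_of_injOn fun p hp q hq he =>
          Prod.ext ((hA p hp q hq).mpr he) he).symm
    _ ≤ n₂ := by simpa using Finset.card_le_univ (A.image Prod.snd)

lemma IsAssignment.unmatched_left_card {A : Finset (Fin n₁ × Fin n₂)} (hA : IsAssignment A) :
    (Finset.univ.filter (fun i => ∀ j, (i, j) ∉ A)).card + A.card = n₁ := by
  classical
  have himg : (Finset.univ.filter (fun i => ∀ j, (i, j) ∉ A)) = (A.image Prod.fst)ᶜ := by
    ext i
    simp only [mem_filter, mem_univ, true_and, mem_compl, mem_image, not_exists, not_and,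
      Prod.exists]
    constructor
    · rintro h a b hab rfl
      exact h b hab
    · intro h j hj
      exact h i j hj rfl
  rw [himg, card_compl, Finset.card_image_of_injOn
    (fun p hp q hq he => Prod.ext he ((hA p hp q hq).mp he))]
  have := hA.card_le_left
  simp only [Fintype.card_fin]
  omega

lemma IsAssignment.unmatched_right_card {A : Finset (Fin n₁ × Fin n₂)} (hA : IsAssignment A) :
    (Finset.univ.filter (fun j => ∀ i, (i, j) ∉ A)).card + A.card = n₂ := by
  classical
  have himg : (Finset.univ.filter (fun j => ∀ i, (i, j) ∉ A)) = (A.image Prod.snd)ᶜ := by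
    ext j
    simp only [mem_filter, mem_univ, true_and, mem_compl, mem_image, not_exists, not_and,
      Prod.exists]
    constructor
    · rintro h a b hab rfl
      exact h a hab
    · intro h i hi
      exact h i j hi rfl
  rw [himg, card_compl, Finset.card_image_of_injOn
    (fun p hp q hq he => Prod.ext ((hA p hp q hq).mpr he) he)]
  have := hA.card_le_right
  simp only [Fintype.card_fin]
  omega

end AuxAssignment
section Master

open Finset

variable {n₁ n₂ n₃ : ℕ}

lemma compose_sum_le (A : Finset (Fin n₁ × Fin n₂)) (B : Finset (Fin n₂ × Fin n₃))
    (hA : IsAssignment A) (hB : IsAssignment B)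
    (f₁ : Fin n₁ × Fin n₂ → ℝ) (f₂ : Fin n₂ × Fin n₃ → ℝ) (g : Fin n₁ × Fin n₃ → ℝ)
    (u₁ : Fin n₁ → ℝ) (u₂ : Fin n₂ → ℝ) (u₃ : Fin n₃ → ℝ)
    (hf₁ : ∀ p, 0 ≤ f₁ p) (hf₂ : ∀ p, 0 ≤ f₂ p) (hu₂ : ∀ j, 0 ≤ u₂ j)
    (htri : ∀ i j k, (i, j) ∈ A → (j, k) ∈ B → g (i, k) ≤ f₁ (i, j) + f₂ (j, k))
    (hdel : ∀ i j, (i, j) ∈ A → u₁ i ≤ f₁ (i, j) + u₂ j)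
    (hins : ∀ j k, (j, k) ∈ B → u₃ k ≤ f₂ (j, k) + u₂ j) :
    ∑ p ∈ composeAssignment A B, g p
      + ∑ i ∈ Finset.univ.filter (fun i => ∀ k, (i, k) ∉ composeAssignment A B), u₁ i
      + ∑ k ∈ Finset.univ.filter (fun k => ∀ i, (i, k) ∉ composeAssignment A B), u₃ k
    ≤ (∑ p ∈ A, f₁ p + ∑ i ∈ Finset.univ.filter (fun i => ∀ j, (i, j) ∉ A), u₁ i
        + ∑ j ∈ Finset.univ.filter (fun j => ∀ i, (i, j) ∉ A), u₂ j)
      + (∑ p ∈ B, f₂ p + ∑ j ∈ Finset.univ.filter (fun j => ∀ k, (j, k) ∉ B), u₂ j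
        + ∑ k ∈ Finset.univ.filter (fun k => ∀ j, (j, k) ∉ B), u₃ k) := by
  classical
  set θ := composeAssignment A B with hθdef
  have hθ : IsAssignment θ := hA.compose hB
  have hmid : ∀ p : {p : Fin n₁ × Fin n₃ // p ∈ θ}, ∃ j, (p.1.1, j) ∈ A ∧ (j, p.1.2) ∈ B :=
    fun p => mem_composeAssignment.mp p.2
  choose mid hmidA hmidB using hmid
  set F1θ := Finset.univ.filter (fun i => ∀ k, (i, k) ∉ θ) with hF1θ
  set F3θ := Finset.univ.filter (fun k => ∀ i, (i, k) ∉ θ) with hF3θ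
  set F1A := Finset.univ.filter (fun i : Fin n₁ => ∀ j, (i, j) ∉ A) with hF1A
  set F2A := Finset.univ.filter (fun j : Fin n₂ => ∀ i, (i, j) ∉ A) with hF2A
  set F2B := Finset.univ.filter (fun j : Fin n₂ => ∀ k, (j, k) ∉ B) with hF2B
  set F3B := Finset.univ.filter (fun k : Fin n₃ => ∀ j, (j, k) ∉ B) with hF3B
  have hsub1 : F1A ⊆ F1θ := by
    intro i hi
    simp only [hF1A, mem_filter, mem_univ, true_and] at hi
    simp only [hF1θ, mem_filter, mem_univ, true_and]
    intro k hk
    obtain ⟨j, hj1, _⟩ := mem_composeAssignment.mp hk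
    exact hi j hj1
  have hsub3 : F3B ⊆ F3θ := by
    intro k hk
    simp only [hF3B, mem_filter, mem_univ, true_and] at hk
    simp only [hF3θ, mem_filter, mem_univ, true_and]
    intro i hi
    obtain ⟨j, _, hj2⟩ := mem_composeAssignment.mp hi
    exact hk j hj2
  set W₁ := F1θ \ F1A with hW₁def
  set W₃ := F3θ \ F3B with hW₃def
  have hW₁ : ∀ i : {i // i ∈ W₁}, ∃ j, (i.1, j) ∈ A := by
    intro i
    have h2 := (mem_sdiff.mp i.2).2
    simp only [hF1A, mem_filter, mem_univ, true_and, not_forall, not_not] at h2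
    exact h2
  choose jA hjA using hW₁
  have hW₃ : ∀ k : {k // k ∈ W₃}, ∃ j, (j, k.1) ∈ B := by
    intro k
    have h2 := (mem_sdiff.mp k.2).2
    simp only [hF3B, mem_filter, mem_univ, true_and, not_forall, not_not] at h2
    exact h2
  choose jB hjB using hW₃
  -- unmatched elements of W₁ are not matched in θ
  have hW₁unm : ∀ i : {i // i ∈ W₁}, ∀ k, (i.1, k) ∉ θ := by
    intro i
    have h1 := (mem_sdiff.mp i.2).1
    simp only [hF1θ, mem_filter, mem_univ, true_and] at h1
    exact h1
  have hW₃unm : ∀ k : {k // k ∈ W₃}, ∀ i, (i, k.1) ∉ θ := by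
    intro k
    have h1 := (mem_sdiff.mp k.2).1
    simp only [hF3θ, mem_filter, mem_univ, true_and] at h1
    exact h1
  -- splitting unmatched sums
  have split1 : ∑ i ∈ F1θ, u₁ i = ∑ i ∈ W₁, u₁ i + ∑ i ∈ F1A, u₁ i :=
    (Finset.sum_sdiff hsub1).symm
  have split3 : ∑ k ∈ F3θ, u₃ k = ∑ k ∈ W₃, u₃ k + ∑ k ∈ F3B, u₃ k :=
    (Finset.sum_sdiff hsub3).symm
  have hW₁sum : ∑ i ∈ W₁, u₁ i
      ≤ ∑ i ∈ W₁.attach, f₁ (i.1, jA i) + ∑ i ∈ W₁.attach, u₂ (jA i) := by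
    rw [← Finset.sum_attach W₁ u₁, ← Finset.sum_add_distrib]
    exact Finset.sum_le_sum fun i _ => hdel i.1 (jA i) (hjA i)
  have hW₃sum : ∑ k ∈ W₃, u₃ k
      ≤ ∑ k ∈ W₃.attach, f₂ (jB k, k.1) + ∑ k ∈ W₃.attach, u₂ (jB k) := by
    rw [← Finset.sum_attach W₃ u₃, ← Finset.sum_add_distrib]
    exact Finset.sum_le_sum fun k _ => hins (jB k) k.1 (hjB k)
  have hθsum : ∑ p ∈ θ, g p
      ≤ ∑ p ∈ θ.attach, f₁ (p.1.1, mid p) + ∑ p ∈ θ.attach, f₂ (mid p, p.1.2) := by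
    rw [← Finset.sum_attach θ g, ← Finset.sum_add_distrib]
    refine Finset.sum_le_sum fun p _ => ?_
    have h := htri p.1.1 (mid p) p.1.2 (hmidA p) (hmidB p)
    simpa using h
  -- assembly for A
  have hinjΦ : ∀ x ∈ θ.attach, ∀ y ∈ θ.attach,
      (fun p : {p // p ∈ θ} => (p.1.1, mid p)) x = (fun p : {p // p ∈ θ} => (p.1.1, mid p)) y
      → x = y := by
    intro x _ y _ he
    have he' : (x.1.1, mid x) = (y.1.1, mid y) := he
    have h1 : x.1.1 = y.1.1 := (Prod.mk.inj he').1
    have h2 : x.1.2 = y.1.2 := (hθ x.1 x.2 y.1 y.2).mp h1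
    exact Subtype.ext (Prod.ext h1 h2)
  have hinjΨ : ∀ x ∈ W₁.attach, ∀ y ∈ W₁.attach,
      (fun i : {i // i ∈ W₁} => (i.1, jA i)) x = (fun i : {i // i ∈ W₁} => (i.1, jA i)) y
      → x = y := by
    intro x _ y _ he
    have he' : ((x.1 : Fin n₁), jA x) = (y.1, jA y) := he
    exact Subtype.ext ((Prod.mk.inj he').1)
  have hdisjA : Disjoint (θ.attach.image (fun p : {p // p ∈ θ} => (p.1.1, mid p)))
      (W₁.attach.image (fun i : {i // i ∈ W₁} => (i.1, jA i))) := by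
    rw [Finset.disjoint_left]
    rintro q hq1 hq2
    obtain ⟨p, _, rfl⟩ := Finset.mem_image.mp hq1
    obtain ⟨i, _, hi⟩ := Finset.mem_image.mp hq2
    have hfst : i.1 = p.1.1 := congrArg Prod.fst hi
    refine hW₁unm i p.1.2 ?_
    rw [hfst]
    simpa using p.2
  have hsubA : (θ.attach.image (fun p : {p // p ∈ θ} => (p.1.1, mid p)))
      ∪ (W₁.attach.image (fun i : {i // i ∈ W₁} => (i.1, jA i))) ⊆ A := by
    refine Finset.union_subset ?_ ?_
    · intro q hq
      obtain ⟨p, _, rfl⟩ := Finset.mem_image.mp hq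
      exact hmidA p
    · intro q hq
      obtain ⟨i, _, rfl⟩ := Finset.mem_image.mp hq
      exact hjA i
  have hAbound : ∑ p ∈ θ.attach, f₁ (p.1.1, mid p) + ∑ i ∈ W₁.attach, f₁ (i.1, jA i)
      ≤ ∑ p ∈ A, f₁ p := by
    rw [← Finset.sum_image hinjΦ, ← Finset.sum_image hinjΨ, ← Finset.sum_union hdisjA]
    exact Finset.sum_le_sum_of_subset_of_nonneg hsubA (fun p _ _ => hf₁ p)
  -- assembly for B
  have hinjΦ' : ∀ x ∈ θ.attach, ∀ y ∈ θ.attach,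
      (fun p : {p // p ∈ θ} => (mid p, p.1.2)) x = (fun p : {p // p ∈ θ} => (mid p, p.1.2)) y
      → x = y := by
    intro x _ y _ he
    have he' : (mid x, x.1.2) = (mid y, y.1.2) := he
    have h2 : x.1.2 = y.1.2 := (Prod.mk.inj he').2
    have h1 : x.1.1 = y.1.1 := (hθ x.1 x.2 y.1 y.2).mpr h2
    exact Subtype.ext (Prod.ext h1 h2)
  have hinjΨ' : ∀ x ∈ W₃.attach, ∀ y ∈ W₃.attach,
      (fun k : {k // k ∈ W₃} => (jB k, k.1)) x = (fun k : {k // k ∈ W₃} => (jB k, k.1)) y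
      → x = y := by
    intro x _ y _ he
    have he' : (jB x, (x.1 : Fin n₃)) = (jB y, y.1) := he
    exact Subtype.ext ((Prod.mk.inj he').2)
  have hdisjB : Disjoint (θ.attach.image (fun p : {p // p ∈ θ} => (mid p, p.1.2)))
      (W₃.attach.image (fun k : {k // k ∈ W₃} => (jB k, k.1))) := by
    rw [Finset.disjoint_left]
    rintro q hq1 hq2
    obtain ⟨p, _, rfl⟩ := Finset.mem_image.mp hq1
    obtain ⟨k, _, hk⟩ := Finset.mem_image.mp hq2
    have hsnd : k.1 = p.1.2 := congrArg Prod.snd hk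
    refine hW₃unm k p.1.1 ?_
    rw [hsnd]
    simpa using p.2
  have hsubB : (θ.attach.image (fun p : {p // p ∈ θ} => (mid p, p.1.2)))
      ∪ (W₃.attach.image (fun k : {k // k ∈ W₃} => (jB k, k.1))) ⊆ B := by
    refine Finset.union_subset ?_ ?_
    · intro q hq
      obtain ⟨p, _, rfl⟩ := Finset.mem_image.mp hq
      exact hmidB p
    · intro q hq
      obtain ⟨k, _, rfl⟩ := Finset.mem_image.mp hq
      exact hjB k
  have hBbound : ∑ p ∈ θ.attach, f₂ (mid p, p.1.2) + ∑ k ∈ W₃.attach, f₂ (jB k, k.1)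
      ≤ ∑ p ∈ B, f₂ p := by
    rw [← Finset.sum_image hinjΦ', ← Finset.sum_image hinjΨ', ← Finset.sum_union hdisjB]
    exact Finset.sum_le_sum_of_subset_of_nonneg hsubB (fun p _ _ => hf₂ p)
  -- u₂ bounds
  have hU1 : ∑ i ∈ W₁.attach, u₂ (jA i) ≤ ∑ j ∈ F2B, u₂ j := by
    have hinj : ∀ x ∈ W₁.attach, ∀ y ∈ W₁.attach, jA x = jA y → x = y := by
      intro x _ y _ he
      exact Subtype.ext ((hA _ (hjA x) _ (hjA y)).mpr he)
    rw [← Finset.sum_image hinj]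
    refine Finset.sum_le_sum_of_subset_of_nonneg ?_ (fun j _ _ => hu₂ j)
    intro j hj
    obtain ⟨i, _, rfl⟩ := Finset.mem_image.mp hj
    simp only [hF2B, mem_filter, mem_univ, true_and]
    intro k hk
    exact hW₁unm i k (mem_composeAssignment.mpr ⟨jA i, hjA i, hk⟩)
  have hU3 : ∑ k ∈ W₃.attach, u₂ (jB k) ≤ ∑ j ∈ F2A, u₂ j := by
    have hinj : ∀ x ∈ W₃.attach, ∀ y ∈ W₃.attach, jB x = jB y → x = y := by
      intro x _ y _ he
      exact Subtype.ext ((hB _ (hjB x) _ (hjB y)).mp he)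
    rw [← Finset.sum_image hinj]
    refine Finset.sum_le_sum_of_subset_of_nonneg ?_ (fun j _ _ => hu₂ j)
    intro j hj
    obtain ⟨k, _, rfl⟩ := Finset.mem_image.mp hj
    simp only [hF2A, mem_filter, mem_univ, true_and]
    intro i hi
    exact hW₃unm k i (mem_composeAssignment.mpr ⟨jB k, hi, hjB k⟩)
  linarith

end Master
section SOSPA

open Finset

variable {E : Type*} [MetricSpace E]

lemma exists_ciInf_eq {ι : Type*} [Finite ι] [Nonempty ι] (f : ι → ℝ) :
    ∃ i, (⨅ j, f j) = f i := by
  obtain ⟨i, hi⟩ := Finite.exists_min f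
  exact ⟨i, le_antisymm (ciInf_le (Set.Finite.bddBelow (Set.finite_range f)) i) (le_ciInf hi)⟩

lemma cost_one (c : ℝ) (x y : Polyline E) (θ : Finset (Fin x.1 × Fin y.1)) :
    cost c 1 x y θ = ∑ ij ∈ θ, dist (x.2 ij.1) (y.2 ij.2)
      + c / 2 * ((x.1 : ℝ) + (y.1 : ℝ) - 2 * (θ.card : ℝ)) := by
  have h1 : (1 : ℝ) / 1 = 1 := by norm_num
  simp only [cost, h1, Real.rpow_one]

instance instNonemptyOrdered {n m : ℕ} :
    Nonempty {θ : Finset (Fin n × Fin m) // IsOrderedAssignment θ} :=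
  ⟨⟨∅, isOrderedAssignment_empty⟩⟩

instance instNonemptyAssign {n m : ℕ} :
    Nonempty {θ : Finset (Fin n × Fin m) // IsAssignment θ} :=
  ⟨⟨∅, isAssignment_empty⟩⟩

lemma cost_one_nonneg {c : ℝ} (hc : 0 < c) (x y : Polyline E)
    {θ : Finset (Fin x.1 × Fin y.1)} (hθ : IsAssignment θ) : 0 ≤ cost c 1 x y θ := by
  rw [cost_one]
  have h1 : θ.card ≤ x.1 := hθ.card_le_left
  have h2 : 0 ≤ ∑ ij ∈ θ, dist (x.2 ij.1) (y.2 ij.2) :=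
    Finset.sum_nonneg fun _ _ => dist_nonneg
  have h3 : (θ.card : ℝ) ≤ (x.1 : ℝ) := by exact_mod_cast h1
  have h4 : (θ.card : ℝ) ≤ (y.1 : ℝ) := by exact_mod_cast hθ.card_le_right
  nlinarith

lemma dSOSPA_nonneg {c : ℝ} (hc : 0 < c) (x y : Polyline E) : 0 ≤ dSOSPA c 1 x y :=
  le_ciInf fun θ => cost_one_nonneg hc x y θ.2.isAssignment

lemma dSOSPA_le {c : ℝ} (hc : 0 < c) (x y : Polyline E) :
    dSOSPA c 1 x y ≤ c / 2 * ((x.1 : ℝ) + (y.1 : ℝ)) := by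
  have h := ciInf_le (f := fun θ : {θ : Finset (Fin x.1 × Fin y.1) // IsOrderedAssignment θ}
    => cost c 1 x y θ.1) (Set.Finite.bddBelow (Set.finite_range _)) ⟨∅, isOrderedAssignment_empty⟩
  refine h.trans ?_
  rw [cost_one]
  simp

lemma abs_le_dSOSPA {c : ℝ} (hc : 0 < c) (x y : Polyline E) :
    c / 2 * |(x.1 : ℝ) - (y.1 : ℝ)| ≤ dSOSPA c 1 x y := by
  refine le_ciInf fun θ => ?_
  rw [cost_one]
  have hθ := θ.2.isAssignment
  have h2 : 0 ≤ ∑ ij ∈ θ.1, dist (x.2 ij.1) (y.2 ij.2) :=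
    Finset.sum_nonneg fun _ _ => dist_nonneg
  have h3 : (θ.1.card : ℝ) ≤ (x.1 : ℝ) := by exact_mod_cast hθ.card_le_left
  have h4 : (θ.1.card : ℝ) ≤ (y.1 : ℝ) := by exact_mod_cast hθ.card_le_right
  have habs : |(x.1 : ℝ) - (y.1 : ℝ)| ≤ (x.1 : ℝ) + (y.1 : ℝ) - 2 * (θ.1.card : ℝ) := by
    rcases le_total ((x.1 : ℝ)) ((y.1 : ℝ)) with h | h
    · rw [abs_of_nonpos (by linarith)]; linarith
    · rw [abs_of_nonneg (by linarith)]; linarith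
  nlinarith

/-- cost in "master form" -/
lemma cost_one_master {c : ℝ} (x y : Polyline E) {θ : Finset (Fin x.1 × Fin y.1)}
    (hθ : IsAssignment θ) :
    cost c 1 x y θ = ∑ ij ∈ θ, dist (x.2 ij.1) (y.2 ij.2)
      + ∑ i ∈ Finset.univ.filter (fun i => ∀ j, (i, j) ∉ θ), (c / 2)
      + ∑ j ∈ Finset.univ.filter (fun j => ∀ i, (i, j) ∉ θ), (c / 2) := by
  rw [cost_one]
  rw [Finset.sum_const, Finset.sum_const]
  have h1 := hθ.unmatched_left_card
  have h2 := hθ.unmatched_right_card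
  have h1' : ((Finset.univ.filter (fun i => ∀ j, (i, j) ∉ θ)).card : ℝ)
      = (x.1 : ℝ) - (θ.card : ℝ) := by
    have := congrArg (fun n : ℕ => (n : ℝ)) h1
    push_cast at this ⊢
    linarith
  have h2' : ((Finset.univ.filter (fun j => ∀ i, (i, j) ∉ θ)).card : ℝ)
      = (y.1 : ℝ) - (θ.card : ℝ) := by
    have := congrArg (fun n : ℕ => (n : ℝ)) h2
    push_cast at this ⊢
    linarith
  rw [nsmul_eq_mul, nsmul_eq_mul, h1', h2']
  ring

lemma dSOSPA_triangle {c : ℝ} (hc : 0 < c) (x y z : Polyline E) :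
    dSOSPA c 1 x z ≤ dSOSPA c 1 x y + dSOSPA c 1 y z := by
  obtain ⟨θ₁, h₁⟩ := exists_ciInf_eq
    (fun θ : {θ : Finset (Fin x.1 × Fin y.1) // IsOrderedAssignment θ} => cost c 1 x y θ.1)
  obtain ⟨θ₂, h₂⟩ := exists_ciInf_eq
    (fun θ : {θ : Finset (Fin y.1 × Fin z.1) // IsOrderedAssignment θ} => cost c 1 y z θ.1)
  rw [dSOSPA, dSOSPA, dSOSPA, h₁, h₂]
  refine le_trans (ciInf_le (Set.Finite.bddBelow (Set.finite_range _))
    ⟨composeAssignment θ₁.1 θ₂.1, θ₁.2.compose θ₂.2⟩) ?_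
  rw [cost_one_master x z (θ₁.2.isAssignment.compose θ₂.2.isAssignment),
    cost_one_master x y θ₁.2.isAssignment, cost_one_master y z θ₂.2.isAssignment]
  exact compose_sum_le θ₁.1 θ₂.1 θ₁.2.isAssignment θ₂.2.isAssignment
    (fun p => dist (x.2 p.1) (y.2 p.2)) (fun p => dist (y.2 p.1) (z.2 p.2))
    (fun p => dist (x.2 p.1) (z.2 p.2))
    (fun _ => c / 2) (fun _ => c / 2) (fun _ => c / 2)
    (fun _ => dist_nonneg) (fun _ => dist_nonneg) (fun _ => by linarith)
    (fun i j k _ _ => dist_triangle _ _ _)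
    (fun i j _ => by have := dist_nonneg (x := x.2 i) (y := y.2 j); linarith)
    (fun j k _ => by have := dist_nonneg (x := y.2 j) (y := z.2 k); linarith)

end SOSPA
section Norm

variable {E : Type*} [MetricSpace E]

lemma steinhaus {u v w a b e : ℝ} (ha : 0 ≤ a) (hb : 0 ≤ b) (he : 0 ≤ e)
    (hu : 0 < u) (hv : 0 < v) (hw : 0 < w)
    (h1 : u ≤ w + b) (h2 : v ≤ w + a) (heab : e ≤ a + b) :
    2 * e / (w + e) ≤ 2 * a / (u + a) + 2 * b / (v + b) := by
  have k1 : 2 * a / (w + a + b) ≤ 2 * a / (u + a) := by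
    apply div_le_div_of_nonneg_left (by linarith) (by linarith) (by linarith)
  have k2 : 2 * b / (w + a + b) ≤ 2 * b / (v + b) := by
    apply div_le_div_of_nonneg_left (by linarith) (by linarith) (by linarith)
  have k3 : 2 * e / (w + e) ≤ 2 * (a + b) / (w + (a + b)) := by
    rw [div_le_div_iff₀ (by linarith) (by linarith)]
    nlinarith
  have k4 : 2 * (a + b) / (w + (a + b)) = 2 * a / (w + a + b) + 2 * b / (w + a + b) := by
    rw [show 2 * (a + b) = 2 * a + 2 * b by ring, add_div,
      show w + (a + b) = w + a + b by ring]
  linarith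

lemma dSOSPAn_one (c : ℝ) (x y : Polyline E) :
    dSOSPAn c 1 x y = if x.1 = 0 ∧ y.1 = 0 then 0
      else 2 * dSOSPA c 1 x y /
        (c / 2 * ((x.1 : ℝ) + (y.1 : ℝ)) + dSOSPA c 1 x y) := by
  have h1 : (1 : ℝ) / 1 = 1 := by norm_num
  simp only [dSOSPAn, h1, Real.rpow_one]

lemma dSOSPAn_nonneg {c : ℝ} (hc : 0 < c) (x y : Polyline E) : 0 ≤ dSOSPAn c 1 x y := by
  rw [dSOSPAn_one]
  split
  · exact le_refl 0
  · apply div_nonneg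
    · have := dSOSPA_nonneg hc x y; linarith
    · have := dSOSPA_nonneg hc x y
      have hx : (0:ℝ) ≤ (x.1 : ℝ) := Nat.cast_nonneg _
      have hy : (0:ℝ) ≤ (y.1 : ℝ) := Nat.cast_nonneg _
      nlinarith

lemma denom_pos {c : ℝ} (hc : 0 < c) (x y : Polyline E) (h : ¬(x.1 = 0 ∧ y.1 = 0)) :
    0 < c / 2 * ((x.1 : ℝ) + (y.1 : ℝ)) := by
  have : 0 < x.1 + y.1 := by
    rcases Nat.eq_zero_or_pos (x.1 + y.1) with h0 | h0
    · exact absurd ⟨Nat.eq_zero_of_add_eq_zero_right h0, Nat.eq_zero_of_add_eq_zero_left h0⟩ h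
    · exact h0
  have : (0:ℝ) < (x.1 : ℝ) + (y.1 : ℝ) := by exact_mod_cast this
  nlinarith

lemma dSOSPAn_le_one {c : ℝ} (hc : 0 < c) (x y : Polyline E) : dSOSPAn c 1 x y ≤ 1 := by
  rw [dSOSPAn_one]
  split
  · norm_num
  · next h =>
    have hN := denom_pos hc x y h
    have hD := dSOSPA_nonneg hc x y
    have hle := dSOSPA_le hc x y
    rw [div_le_one (by linarith)]
    linarith

lemma dSOSPAn_triangle {c : ℝ} (hc : 0 < c) (x y z : Polyline E) :
    dSOSPAn c 1 x z ≤ dSOSPAn c 1 x y + dSOSPAn c 1 y z := by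
  have hae := dSOSPA_nonneg hc x y
  have hbe := dSOSPA_nonneg hc y z
  have hee := dSOSPA_nonneg hc x z
  have htri := dSOSPA_triangle hc x y z
  by_cases hxz : x.1 = 0 ∧ z.1 = 0
  · rw [show dSOSPAn c 1 x z = 0 by rw [dSOSPAn_one, if_pos hxz]]
    exact add_nonneg (dSOSPAn_nonneg hc x y) (dSOSPAn_nonneg hc y z)
  · by_cases hxy : x.1 = 0 ∧ y.1 = 0
    · have hz0 : z.1 ≠ 0 := fun h => hxz ⟨hxy.1, h⟩
      have hyz : ¬(y.1 = 0 ∧ z.1 = 0) := fun h => hz0 h.2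
      rw [dSOSPAn_one, dSOSPAn_one, dSOSPAn_one, if_neg hxz, if_pos hxy, if_neg hyz]
      have hweq : c / 2 * ((x.1 : ℝ) + (z.1 : ℝ)) = c / 2 * ((y.1 : ℝ) + (z.1 : ℝ)) := by
        rw [hxy.1, hxy.2]
      have ha0 : dSOSPA c 1 x y = 0 := by
        have := dSOSPA_le hc x y
        rw [hxy.1, hxy.2] at this
        simp at this
        linarith
      have heb : dSOSPA c 1 x z ≤ dSOSPA c 1 y z := by rw [ha0] at htri; linarith
      have hw := denom_pos hc y z hyz
      rw [hweq, zero_add]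
      rw [div_le_div_iff₀ (by linarith) (by linarith)]
      nlinarith
    · by_cases hyz : y.1 = 0 ∧ z.1 = 0
      · have hx0 : x.1 ≠ 0 := fun h => hxz ⟨h, hyz.2⟩
        have hxy' : ¬(x.1 = 0 ∧ y.1 = 0) := fun h => hx0 h.1
        rw [dSOSPAn_one, dSOSPAn_one, dSOSPAn_one, if_neg hxz, if_pos hyz, if_neg hxy']
        have hweq : c / 2 * ((x.1 : ℝ) + (z.1 : ℝ)) = c / 2 * ((x.1 : ℝ) + (y.1 : ℝ)) := by
          rw [hyz.1, hyz.2]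
        have hb0 : dSOSPA c 1 y z = 0 := by
          have := dSOSPA_le hc y z
          rw [hyz.1, hyz.2] at this
          simp at this
          linarith
        have heb : dSOSPA c 1 x z ≤ dSOSPA c 1 x y := by rw [hb0] at htri; linarith
        have hw := denom_pos hc x y hxy'
        rw [hweq, add_zero]
        rw [div_le_div_iff₀ (by linarith) (by linarith)]
        nlinarith
      · rw [dSOSPAn_one, dSOSPAn_one, dSOSPAn_one, if_neg hxz, if_neg hxy, if_neg hyz]
        have h1 : c / 2 * ((x.1 : ℝ) + (y.1 : ℝ))
            ≤ c / 2 * ((x.1 : ℝ) + (z.1 : ℝ)) + dSOSPA c 1 y z := by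
          have habs := abs_le_dSOSPA hc y z
          have : (y.1 : ℝ) - (z.1 : ℝ) ≤ |(y.1 : ℝ) - (z.1 : ℝ)| := le_abs_self _
          nlinarith
        have h2 : c / 2 * ((y.1 : ℝ) + (z.1 : ℝ))
            ≤ c / 2 * ((x.1 : ℝ) + (z.1 : ℝ)) + dSOSPA c 1 x y := by
          have habs := abs_le_dSOSPA hc x y
          have : (y.1 : ℝ) - (x.1 : ℝ) ≤ |(x.1 : ℝ) - (y.1 : ℝ)| := by
            rw [abs_sub_comm]; exact le_abs_self _
          nlinarith
        exact steinhaus hae hbe hee (denom_pos hc x y hxy) (denom_pos hc y z hyz)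
          (denom_pos hc x z hxz) h1 h2 htri

end Norm
section Pointwise

lemma pointwise_tri {rx ry rz dxy dyz dxz : ℝ}
    (hrx : 0 ≤ rx) (hry : 0 ≤ ry) (hrz : 0 ≤ rz)
    (hdxy0 : 0 ≤ dxy) (hdyz0 : 0 ≤ dyz) (hdxz0 : 0 ≤ dxz)
    (hdxy1 : dxy ≤ 1) (hdyz1 : dyz ≤ 1) (hdxz1 : dxz ≤ 1)
    (htri : dxz ≤ dxy + dyz) :
    min rx rz * dxz + |rx - rz| / 2
      ≤ (min rx ry * dxy + |rx - ry| / 2) + (min ry rz * dyz + |ry - rz| / 2) := by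
  rcases le_total rx ry with h1 | h1 <;> rcases le_total ry rz with h2 | h2 <;>
    rcases le_total rx rz with h3 | h3
  · rw [min_eq_left h3, min_eq_left h1, min_eq_left h2, abs_of_nonpos (by linarith),
      abs_of_nonpos (by linarith), abs_of_nonpos (by linarith)]
    nlinarith [mul_le_mul_of_nonneg_left htri hrx, mul_le_mul_of_nonneg_right h1 hdyz0]
  · have e1 : rx = rz := le_antisymm (h1.trans h2) h3
    have e2 : ry = rz := le_antisymm h2 (h3.trans h1)
    subst e1; subst e2
    simp only [min_self, sub_self, abs_zero]
    nlinarith [mul_le_mul_of_nonneg_left htri hrx]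
  · rw [min_eq_left h3, min_eq_left h1, min_eq_right h2, abs_of_nonpos (by linarith),
      abs_of_nonpos (by linarith), abs_of_nonneg (by linarith)]
    nlinarith [mul_le_mul_of_nonneg_left htri hrx, mul_le_mul_of_nonneg_right h3 hdyz0]
  · rw [min_eq_right h3, min_eq_left h1, min_eq_right h2, abs_of_nonneg (by linarith),
      abs_of_nonpos (by linarith), abs_of_nonneg (by linarith)]
    nlinarith [mul_le_mul_of_nonneg_left htri hrz, mul_le_mul_of_nonneg_right h3 hdxy0]
  · rw [min_eq_left h3, min_eq_right h1, min_eq_left h2, abs_of_nonpos (by linarith),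
      abs_of_nonneg (by linarith), abs_of_nonpos (by linarith)]
    nlinarith [mul_le_mul_of_nonneg_left htri hry,
      mul_le_of_le_one_right (show (0:ℝ) ≤ rx - ry by linarith) hdxz1]
  · rw [min_eq_right h3, min_eq_right h1, min_eq_left h2, abs_of_nonneg (by linarith),
      abs_of_nonneg (by linarith), abs_of_nonpos (by linarith)]
    nlinarith [mul_le_mul_of_nonneg_left htri hry,
      mul_le_of_le_one_right (show (0:ℝ) ≤ rz - ry by linarith) hdxz1]
  · have e1 : rx = rz := le_antisymm h3 (h2.trans h1)
    have e2 : ry = rz := le_antisymm (h1.trans h3) h2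
    subst e1; subst e2
    simp only [min_self, sub_self, abs_zero]
    nlinarith [mul_le_mul_of_nonneg_left htri hrx]
  · rw [min_eq_right h3, min_eq_right h1, min_eq_right h2, abs_of_nonneg (by linarith),
      abs_of_nonneg (by linarith), abs_of_nonneg (by linarith)]
    nlinarith [mul_le_mul_of_nonneg_left htri hrz, mul_le_mul_of_nonneg_right h2 hdxy0]

end Pointwise

/-- For `p = 1` and any `c > 0`, the DAP distance satisfies the triangle
inequality. -/
theorem dPLD_triangle {E : Type*} [MetricSpace E] (c : ℝ) (hc : 0 < c)
    (X Y Z : PPSet E) :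
    dPLD c 1 X Z ≤ dPLD c 1 X Y + dPLD c 1 Y Z := by
  have h11 : (1 : ℝ) / 1 = 1 := by norm_num
  simp only [dPLD, h11, Real.rpow_one]
  obtain ⟨θ₁, hθ₁⟩ := exists_ciInf_eq
    (fun θ : {θ : Finset (Fin X.n × Fin Y.n) // IsAssignment θ} =>
      ∑ ij ∈ θ.1, (min (X.r ij.1) (Y.r ij.2) * dSOSPAn c 1 (X.poly ij.1) (Y.poly ij.2)
          + |X.r ij.1 - Y.r ij.2| / 2)
        + (∑ i ∈ Finset.univ.filter (fun i => ∀ j, (i, j) ∉ θ.1), X.r i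
            + ∑ j ∈ Finset.univ.filter (fun j => ∀ i, (i, j) ∉ θ.1), Y.r j) / 2)
  obtain ⟨θ₂, hθ₂⟩ := exists_ciInf_eq
    (fun θ : {θ : Finset (Fin Y.n × Fin Z.n) // IsAssignment θ} =>
      ∑ ij ∈ θ.1, (min (Y.r ij.1) (Z.r ij.2) * dSOSPAn c 1 (Y.poly ij.1) (Z.poly ij.2)
          + |Y.r ij.1 - Z.r ij.2| / 2)
        + (∑ i ∈ Finset.univ.filter (fun i => ∀ j, (i, j) ∉ θ.1), Y.r i
            + ∑ j ∈ Finset.univ.filter (fun j => ∀ i, (i, j) ∉ θ.1), Z.r j) / 2)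
  rw [hθ₁, hθ₂]
  refine le_trans (ciInf_le (Set.Finite.bddBelow (Set.finite_range _))
    ⟨composeAssignment θ₁.1 θ₂.1, θ₁.2.compose θ₂.2⟩) ?_
  have hM := compose_sum_le θ₁.1 θ₂.1 θ₁.2 θ₂.2
    (fun p => min (X.r p.1) (Y.r p.2) * dSOSPAn c 1 (X.poly p.1) (Y.poly p.2)
      + |X.r p.1 - Y.r p.2| / 2)
    (fun p => min (Y.r p.1) (Z.r p.2) * dSOSPAn c 1 (Y.poly p.1) (Z.poly p.2)
      + |Y.r p.1 - Z.r p.2| / 2)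
    (fun p => min (X.r p.1) (Z.r p.2) * dSOSPAn c 1 (X.poly p.1) (Z.poly p.2)
      + |X.r p.1 - Z.r p.2| / 2)
    (fun i => X.r i / 2) (fun j => Y.r j / 2) (fun k => Z.r k / 2)
    (fun p => add_nonneg (mul_nonneg (le_min (X.r_nonneg p.1) (Y.r_nonneg p.2))
      (dSOSPAn_nonneg hc _ _)) (by positivity))
    (fun p => add_nonneg (mul_nonneg (le_min (Y.r_nonneg p.1) (Z.r_nonneg p.2))
      (dSOSPAn_nonneg hc _ _)) (by positivity))
    (fun j => by have := Y.r_nonneg j; linarith)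
    (fun i j k _ _ => pointwise_tri (X.r_nonneg i) (Y.r_nonneg j) (Z.r_nonneg k)
      (dSOSPAn_nonneg hc _ _) (dSOSPAn_nonneg hc _ _) (dSOSPAn_nonneg hc _ _)
      (dSOSPAn_le_one hc _ _) (dSOSPAn_le_one hc _ _) (dSOSPAn_le_one hc _ _)
      (dSOSPAn_triangle hc _ _ _))
    (fun i j _ => by
      have h1 : X.r i - Y.r j ≤ |X.r i - Y.r j| := le_abs_self _
      have h2 : 0 ≤ min (X.r i) (Y.r j) * dSOSPAn c 1 (X.poly i) (Y.poly j) :=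
        mul_nonneg (le_min (X.r_nonneg i) (Y.r_nonneg j)) (dSOSPAn_nonneg hc _ _)
      linarith)
    (fun j k _ => by
      have h1 : Z.r k - Y.r j ≤ |Y.r j - Z.r k| := by
        rw [abs_sub_comm]; exact le_abs_self _
      have h2 : 0 ≤ min (Y.r j) (Z.r k) * dSOSPAn c 1 (Y.poly j) (Z.poly k) :=
        mul_nonneg (le_min (Y.r_nonneg j) (Z.r_nonneg k)) (dSOSPAn_nonneg hc _ _)
      linarith)
  have e1 : ∑ i ∈ Finset.univ.filter
      (fun i => ∀ k, (i, k) ∉ composeAssignment θ₁.1 θ₂.1), X.r i / 2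
      = (∑ i ∈ Finset.univ.filter
        (fun i => ∀ k, (i, k) ∉ composeAssignment θ₁.1 θ₂.1), X.r i) / 2 :=
    (Finset.sum_div _ _ _).symm
  have e2 : ∑ k ∈ Finset.univ.filter
      (fun k => ∀ i, (i, k) ∉ composeAssignment θ₁.1 θ₂.1), Z.r k / 2
      = (∑ k ∈ Finset.univ.filter
        (fun k => ∀ i, (i, k) ∉ composeAssignment θ₁.1 θ₂.1), Z.r k) / 2 :=
    (Finset.sum_div _ _ _).symm
  have e3 : ∑ i ∈ Finset.univ.filter (fun i => ∀ j, (i, j) ∉ θ₁.1), X.r i / 2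
      = (∑ i ∈ Finset.univ.filter (fun i => ∀ j, (i, j) ∉ θ₁.1), X.r i) / 2 :=
    (Finset.sum_div _ _ _).symm
  have e4 : ∑ j ∈ Finset.univ.filter (fun j => ∀ i, (i, j) ∉ θ₁.1), Y.r j / 2
      = (∑ j ∈ Finset.univ.filter (fun j => ∀ i, (i, j) ∉ θ₁.1), Y.r j) / 2 :=
    (Finset.sum_div _ _ _).symm
  have e5 : ∑ j ∈ Finset.univ.filter (fun j => ∀ k, (j, k) ∉ θ₂.1), Y.r j / 2
      = (∑ j ∈ Finset.univ.filter (fun j => ∀ k, (j, k) ∉ θ₂.1), Y.r j) / 2 :=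
    (Finset.sum_div _ _ _).symm
  have e6 : ∑ k ∈ Finset.univ.filter (fun k => ∀ j, (j, k) ∉ θ₂.1), Z.r k / 2
      = (∑ k ∈ Finset.univ.filter (fun k => ∀ j, (j, k) ∉ θ₂.1), Z.r k) / 2 :=
    (Finset.sum_div _ _ _).symm
  rw [e1, e2, e3, e4, e5, e6] at hM
  linarith
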